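/- arXiv:1610.02814 — 4 statements merged into one kernel-verified Lean document; each statement's English description precedes it below -/
import Mathlib

section
/- Let P(z) = (2/27)(z²+3)³(z²−1) + 1. The finite critical points of P (roots of P') are exactly 0, √3·i, and −√3·i; moreover P(±√3·i) = 1, P(0) = −1, P(−1) = 1, and P(1) = 1. The local degree of P at ±√3·i is 3 and at 0 is 4. -/
open Polynomial

/-- The polynomial `P(z) = (2/27)(z²+3)³(z²−1) + 1` over `ℂ`. -/
noncomputable def P8 : Polynomial ℂ :=
  C (2 / 27) * (X ^ 2 + C 3) ^ 3 * (X ^ 2 - C 1) + C 1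

lemma sq_sqrt3I : ((Real.sqrt 3 : ℂ) * Complex.I) ^ 2 = -3 := by
  have h3 : ((Real.sqrt 3 : ℝ) : ℂ) ^ 2 = 3 := by
    norm_cast
    rw [Real.sq_sqrt (by norm_num : (3:ℝ) ≥ 0)]
  rw [mul_pow, Complex.I_sq, h3]
  ring

lemma sqrt3I_ne : ((Real.sqrt 3 : ℂ) * Complex.I) ≠ 0 := by
  intro h
  have := sq_sqrt3I
  rw [h] at this
  norm_num at this

/-- The finite critical points of `P` are exactly `0`, `√3·i`, `−√3·i`; the critical
and postcritical values are `P(±√3·i) = 1`, `P(0) = −1`, `P(−1) = 1`, `P(1) = 1`;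
and the local degrees (multiplicity of `c` as a root of `P(z) − P(c)`) are `3` at
`±√3·i` and `4` at `0`. -/
theorem P8_critical_points :
    (∀ z : ℂ, (derivative P8).eval z = 0 ↔
        z = 0 ∨ z = (Real.sqrt 3 : ℂ) * Complex.I ∨ z = -((Real.sqrt 3 : ℂ) * Complex.I)) ∧
    P8.eval ((Real.sqrt 3 : ℂ) * Complex.I) = 1 ∧
    P8.eval (-((Real.sqrt 3 : ℂ) * Complex.I)) = 1 ∧
    P8.eval 0 = -1 ∧ P8.eval (-1) = 1 ∧ P8.eval 1 = 1 ∧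
    rootMultiplicity ((Real.sqrt 3 : ℂ) * Complex.I) (P8 - C 1) = 3 ∧
    rootMultiplicity (-((Real.sqrt 3 : ℂ) * Complex.I)) (P8 - C 1) = 3 ∧
    rootMultiplicity 0 (P8 - C (-1)) = 4 := by
  set s : ℂ := (Real.sqrt 3 : ℂ) * Complex.I with hs
  have hs2 : s ^ 2 = -3 := sq_sqrt3I
  have hsne : s ≠ 0 := sqrt3I_ne
  have hC3 : (C 3 : ℂ[X]) = -(C s) ^ 2 := by
    rw [← C_pow, hs2]; simp
  have h16 : (C (16/27) : ℂ[X]) = C (2/27) * 8 := by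
    rw [← map_ofNat (C : ℂ →+* ℂ[X]) 8, ← C_mul]; norm_num
  have hder : derivative P8 = C (16/27) * X ^ 3 * (X ^ 2 + C 3) ^ 2 := by
    unfold P8
    rw [h16]
    rw [derivative_add, derivative_C, derivative_mul, derivative_mul, derivative_C]
    simp only [derivative_pow, derivative_add, derivative_sub, derivative_C,
      derivative_X_pow, derivative_X, map_ofNat, C_1, derivative_one,
      derivative_ofNat, C_eq_natCast, Nat.cast_ofNat]
    ring
  refine ⟨?_, ?_, ?_, ?_, ?_, ?_, ?_, ?_, ?_⟩
  · intro z
    rw [hder]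
    simp only [eval_mul, eval_pow, eval_add, eval_C, eval_X]
    constructor
    · intro h
      have h16 : (16/27 : ℂ) ≠ 0 := by norm_num
      rcases mul_eq_zero.mp h with h1 | h2
      · rcases mul_eq_zero.mp h1 with h3 | h4
        · exact absurd h3 h16
        · left; exact pow_eq_zero_iff (by norm_num) |>.mp h4
      · right
        have hz2 : z ^ 2 = s ^ 2 := by
          have := pow_eq_zero_iff (n := 2) (by norm_num) |>.mp h2
          rw [hs2]
          linear_combination this
        exact sq_eq_sq_iff_eq_or_eq_neg.mp hz2
    · rintro (rfl | rfl | rfl)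
      · ring
      · rw [hs2]; ring
      · rw [neg_pow_two, hs2]; ring
  · simp only [P8, eval_add, eval_mul, eval_sub, eval_pow, eval_C, eval_X]
    rw [hs2]; norm_num
  · simp only [P8, eval_add, eval_mul, eval_sub, eval_pow, eval_C, eval_X]
    rw [neg_pow_two, hs2]; norm_num
  · simp only [P8, eval_add, eval_mul, eval_sub, eval_pow, eval_C, eval_X]
    norm_num
  · simp only [P8, eval_add, eval_mul, eval_sub, eval_pow, eval_C, eval_X]
    norm_num
  · simp only [P8, eval_add, eval_mul, eval_sub, eval_pow, eval_C, eval_X]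
    norm_num
  · have hfact : P8 - C 1 =
        (C (2/27) * (X + C s) ^ 3 * (X ^ 2 - C 1)) * (X - C s) ^ 3 := by
      unfold P8; rw [hC3]; simp only [C_1]; ring
    rw [hfact, rootMultiplicity_mul_X_sub_C_pow, rootMultiplicity_eq_zero]
    · intro h
      simp only [IsRoot, eval_mul, eval_pow, eval_add, eval_sub, eval_C, eval_X] at h
      rcases mul_eq_zero.mp h with h1 | h2
      · rcases mul_eq_zero.mp h1 with h3 | h4
        · norm_num at h3
        · have : s + s = 0 := pow_eq_zero_iff (by norm_num) |>.mp h4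
          exact hsne (by linear_combination this / 2)
      · rw [hs2] at h2; norm_num at h2
    · intro h
      have := congrArg (eval (2 * s)) h
      simp only [eval_mul, eval_pow, eval_add, eval_sub, eval_C, eval_X, eval_zero] at this
      rcases mul_eq_zero.mp this with h1 | h2
      · rcases mul_eq_zero.mp h1 with h3 | h4
        · norm_num at h3
        · have : 2 * s + s = 0 := pow_eq_zero_iff (by norm_num) |>.mp h4
          exact hsne (by linear_combination this / 3)
      · have : (2*s)^2 - 1 = 0 := h2
        rw [mul_pow, hs2] at this
        norm_num at this
  · have hfact : P8 - C 1 =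
        (C (2/27) * (X - C s) ^ 3 * (X ^ 2 - C 1)) * (X - C (-s)) ^ 3 := by
      unfold P8; rw [hC3]; simp only [C_1, map_neg]; ring
    rw [hfact, rootMultiplicity_mul_X_sub_C_pow, rootMultiplicity_eq_zero]
    · intro h
      simp only [IsRoot, eval_mul, eval_pow, eval_add, eval_sub, eval_C, eval_X] at h
      rcases mul_eq_zero.mp h with h1 | h2
      · rcases mul_eq_zero.mp h1 with h3 | h4
        · norm_num at h3
        · have : -s - s = 0 := pow_eq_zero_iff (by norm_num) |>.mp h4
          exact hsne (by linear_combination -this / 2)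
      · have : (-s)^2 - 1 = 0 := h2
        rw [neg_pow, hs2] at this
        norm_num at this
    · intro h
      have := congrArg (eval (2 * s)) h
      simp only [eval_mul, eval_pow, eval_add, eval_sub, eval_C, eval_X, eval_zero] at this
      rcases mul_eq_zero.mp this with h1 | h2
      · rcases mul_eq_zero.mp h1 with h3 | h4
        · norm_num at h3
        · have : 2 * s - s = 0 := pow_eq_zero_iff (by norm_num) |>.mp h4
          exact hsne (by linear_combination this)
      · have : (2*s)^2 - 1 = 0 := h2
        rw [mul_pow, hs2] at this
        norm_num at this
  · have hfact : P8 - C (-1) =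
        (C (2/27) * (X ^ 4 + C 8 * X ^ 2 + C 18)) * (X - C 0) ^ 4 := by
      have h27 : (27 : ℂ[X]) * C (2/27 : ℂ) = 2 := by
        rw [← map_ofNat (C : ℂ →+* ℂ[X]) 27, ← map_ofNat (C : ℂ →+* ℂ[X]) 2, ← C_mul]
        norm_num
      unfold P8; simp only [map_ofNat, C_1, map_neg, C_0]; linear_combination -h27
    rw [hfact, rootMultiplicity_mul_X_sub_C_pow, rootMultiplicity_eq_zero]
    · intro h
      simp only [IsRoot, eval_mul, eval_pow, eval_add, eval_C, eval_X] at h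
      norm_num at h
    · intro h
      have := congrArg (eval 1) h
      simp only [eval_mul, eval_pow, eval_add, eval_C, eval_X, eval_zero, one_pow, mul_one] at this
      norm_num at this
end

section
/- Let P(z) = (2/27)(z²+3)³(z²−1) + 1, viewed as a real polynomial. Then P maps the interval [−1,1] into itself: for all real x with −1 ≤ x ≤ 1, we have −1 ≤ P(x) ≤ 1. -/
/-- The polynomial `P(x) = (2/27)(x²+3)³(x²−1) + 1` maps the real interval `[-1, 1]`
into itself. -/
theorem P_maps_interval_into_itself :
    ∀ x : ℝ, -1 ≤ x → x ≤ 1 →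
      -1 ≤ (2 / 27) * (x ^ 2 + 3) ^ 3 * (x ^ 2 - 1) + 1 ∧
        (2 / 27) * (x ^ 2 + 3) ^ 3 * (x ^ 2 - 1) + 1 ≤ 1 := by
  intro x h1 h2
  have h3 : x ^ 2 ≤ 1 := by nlinarith
  have h0 : 0 ≤ x ^ 2 := sq_nonneg x
  constructor
  · nlinarith [sq_nonneg (x^2), sq_nonneg (x^2*(x^2+3)), mul_nonneg h0 h0, pow_le_one₀ h0 h3 (n := 3)]
  · nlinarith [pow_nonneg (by nlinarith : (0:ℝ) ≤ x^2+3) 3]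
end

section
/- Let f : S → S with invariant subset E, endpoints p, q ∈ E, f(p) = p and f(q) = p, and a multiplicative local-degree function deg. Suppose deg(f, p) = 1, every 1-vertex v ∈ E \ {p,q} with f(v) = p has deg(f, v) = k_p, every 1-vertex w ∈ E \ {p,q} with f(w) = q has deg(f, w) = k_q, and k_p = k_q · deg(f, q). Then for every n ≥ 1 and every v ∈ E \ {p,q} with f^n(v) = p, the orbit v, f(v), ..., f^n(v) gives deg(f^n, v) = k_p, and likewise deg(f^n, w) = k_q whenever f^n(w) = q, provided each such orbit passes through exactly one 1-vertex of the corresponding type (and possibly through q). -/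
/-- Conditions (c1), (c2), (c4) imply (c), in the case `f(q) = p`: if `deg(f,p) = 1`,
every 1-vertex of type `p` (resp. `q`) on `E \ {p,q}` has local degree `k_p`
(resp. `k_q`), `k_p = k_q · deg(f,q)`, and all other points of `E \ {p,q}` are
unramified, then every `n`-vertex in `E \ {p,q}` of type `p` (resp. `q`) has local
degree `k_p` (resp. `k_q`) under `fⁿ`. -/
theorem degrees_along_invariant_edge {S : Type*} (f : S → S) (E : Set S)
    (hE : Set.MapsTo f E E) (p q : S) (hp : p ∈ E) (hq : q ∈ E) (hpq : p ≠ q)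
    (hfp : f p = p) (hfq : f q = p)
    (deg : ℕ → S → ℕ)
    (hdeg0 : ∀ v : S, deg 0 v = 1)
    (hchain : ∀ (n : ℕ) (v : S), deg (n + 1) v = deg n v * deg 1 (f^[n] v))
    (hdegp : deg 1 p = 1)
    (k_p k_q : ℕ)
    (hVp : ∀ v ∈ E \ {p, q}, f v = p → deg 1 v = k_p)
    (hVq : ∀ w ∈ E \ {p, q}, f w = q → deg 1 w = k_q)
    (hkpq : k_p = k_q * deg 1 q)
    (hNC : ∀ v ∈ E \ {p, q}, f v ≠ p → f v ≠ q → deg 1 v = 1) :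
    ∀ n : ℕ, 1 ≤ n → ∀ v ∈ E \ {p, q},
      (f^[n] v = p → deg n v = k_p) ∧ (f^[n] v = q → deg n v = k_q) := by
  -- points whose whole orbit avoids {p,q} are unramified
  have hB : ∀ n : ℕ, ∀ v : S, v ∈ E → f^[n] v ≠ p → f^[n] v ≠ q → deg n v = 1 := by
    intro n
    induction n with
    | zero => intro v _ _ _; exact hdeg0 v
    | succ n ih =>
      intro v hv hnp hnq
      have h1 : f^[n] v ≠ p := by
        intro h; apply hnp; rw [Function.iterate_succ_apply', h, hfp]
      have h2 : f^[n] v ≠ q := by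
        intro h; apply hnp; rw [Function.iterate_succ_apply', h, hfq]
      have hmem : f^[n] v ∈ E := hE.iterate n hv
      have hd1 : deg 1 (f^[n] v) = 1 := by
        refine hNC (f^[n] v) ⟨hmem, by simp [h1, h2]⟩ ?_ ?_
        · rw [← Function.iterate_succ_apply' f n v]; exact hnp
        · rw [← Function.iterate_succ_apply' f n v]; exact hnq
      rw [hchain, ih v hv h1 h2, hd1]
  intro n hn
  induction n, hn using Nat.le_induction with
  | base =>
    intro v hv
    constructor
    · intro h; exact hVp v hv (by simpa using h)
    · intro h; exact hVq v hv (by simpa using h)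
  | succ n hn ih =>
    intro v hv
    constructor
    · intro hfn1
      rcases eq_or_ne (f^[n] v) p with h | h
      · rw [hchain, h, hdegp, mul_one]
        exact (ih v hv).1 h
      rcases eq_or_ne (f^[n] v) q with h2 | h2
      · rw [hchain, h2, (ih v hv).2 h2, ← hkpq]
      · rw [hchain, hB n v hv.1 h h2, one_mul]
        refine hVp _ ⟨hE.iterate n hv.1, by simp [h, h2]⟩ ?_
        rw [← Function.iterate_succ_apply' f n v]; exact hfn1
    · intro hfn1
      have h : f^[n] v ≠ p := by
        intro h
        apply hpq
        rw [← hfn1, Function.iterate_succ_apply', h, hfp]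
      have h2 : f^[n] v ≠ q := by
        intro h2
        apply hpq
        rw [← hfn1, Function.iterate_succ_apply', h2, hfq]
      rw [hchain, hB n v hv.1 h h2, one_mul]
      refine hVq _ ⟨hE.iterate n hv.1, by simp [h, h2]⟩ ?_
      rw [← Function.iterate_succ_apply' f n v]; exact hfn1
end

section
/- In a group generated by elements b and c satisfying (bc)² = 1 and c³ = 1, every element of the quotient by the normal closure H of [b²,c] can be written in the form (b) c^{±1} b^k with k ∈ {0,...,23}, provided additionally b²⁴ = 1; consequently, if additionally b has order dividing 24, the quotient G/H is finite with at most 2·3·24 elements. -/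
private lemma aux_normal_form {Q : Type*} [Group Q] (B C : Q)
    (hgen : Subgroup.closure {B, C} = (⊤ : Subgroup Q))
    (hbc : (B * C) ^ 2 = 1) (hc : C ^ 3 = 1) (hb : B ^ 24 = 1)
    (hcomm : B ^ 2 * C = C * B ^ 2) :
    ∀ g : Q, ∃ (ε : Bool) (j : Fin 3) (k : Fin 24),
      g = (if ε then B else 1) * C ^ (j : ℕ) * B ^ (k : ℕ) := by
  set T : Set Q := {x | ∃ (ε : Bool) (j : Fin 3) (k : Fin 24),
      x = (if ε then B else 1) * C ^ (j : ℕ) * B ^ (k : ℕ)} with hT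
  have hBmod : ∀ n : ℕ, B ^ n = B ^ (n % 24) := fun n => pow_eq_pow_mod n hb
  have hCmod : ∀ n : ℕ, C ^ n = C ^ (n % 3) := fun n => pow_eq_pow_mod n hc
  have mem : ∀ (ε : Bool) (j k : ℕ), (if ε then B else 1) * C ^ j * B ^ k ∈ T := by
    intro ε j k
    refine ⟨ε, ⟨j % 3, Nat.mod_lt _ (by norm_num)⟩, ⟨k % 24, Nat.mod_lt _ (by norm_num)⟩, ?_⟩
    simp only
    rw [← hBmod, ← hCmod]
  -- basic consequences of the relations
  have hCinv : C⁻¹ = C ^ 2 := by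
    apply inv_eq_of_mul_eq_one_right
    rw [← pow_succ']; exact hc
  have hBinv : B⁻¹ = B ^ 23 := by
    apply inv_eq_of_mul_eq_one_right
    rw [← pow_succ']; exact hb
  have hBC1 : B * C = C ^ 2 * B ^ 23 := by
    have h1 : (B * C) * (B * C) = 1 := by rw [← sq]; exact hbc
    have h2 : (B * C)⁻¹ = B * C := inv_eq_of_mul_eq_one_right h1
    rw [mul_inv_rev, hCinv, hBinv] at h2
    exact h2.symm
  have hcm : ∀ m : ℕ, Commute (B ^ (2 * m)) C := by
    intro m
    have h : Commute (B ^ 2) C := hcomm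
    simpa [pow_mul] using h.pow_left m
  have hOdd : ∀ m : ℕ, B ^ (2 * m + 1) * C = C ^ 2 * B ^ (2 * m + 23) := by
    intro m
    have hcm2 : Commute (B ^ (2 * m)) (C ^ 2) := (hcm m).pow_right 2
    calc B ^ (2 * m + 1) * C = B ^ (2 * m) * (B * C) := by
          rw [pow_succ, mul_assoc]
      _ = B ^ (2 * m) * (C ^ 2 * B ^ 23) := by rw [hBC1]
      _ = C ^ 2 * B ^ (2 * m) * B ^ 23 := by
          rw [← mul_assoc, hcm2.eq]
      _ = C ^ 2 * B ^ (2 * m + 23) := by rw [mul_assoc, ← pow_add]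
  -- closure of T under right multiplication by generators
  have hTB : ∀ x ∈ T, x * B ∈ T := by
    rintro x ⟨ε, j, k, rfl⟩
    have h3 := mem ε (j : ℕ) ((k : ℕ) + 1)
    rw [pow_succ] at h3
    simpa [mul_assoc] using h3
  have hTC : ∀ x ∈ T, x * C ∈ T := by
    rintro x ⟨ε, j, k, rfl⟩
    rcases Nat.even_or_odd (k : ℕ) with ⟨m, hm⟩ | ⟨m, hm⟩
    · have hco : B ^ (k : ℕ) * C = C * B ^ (k : ℕ) := by
        have h2 := (hcm m).eq
        rw [two_mul, ← hm] at h2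
        exact h2
      have h3 := mem ε ((j : ℕ) + 1) (k : ℕ)
      rw [pow_succ] at h3
      simpa [mul_assoc, hco] using h3
    · have h3 := mem ε ((j : ℕ) + 2) (2 * m + 23)
      rw [pow_add] at h3
      simpa [mul_assoc, hm, hOdd m] using h3
  have hTBn : ∀ x ∈ T, ∀ n : ℕ, x * B ^ n ∈ T := by
    intro x hx n
    induction n with
    | zero => simpa using hx
    | succ n ih => rw [pow_succ, ← mul_assoc]; exact hTB _ ih
  have hTCn : ∀ x ∈ T, ∀ n : ℕ, x * C ^ n ∈ T := by
    intro x hx n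
    induction n with
    | zero => simpa using hx
    | succ n ih => rw [pow_succ, ← mul_assoc]; exact hTC _ ih
  have honeT : (1 : Q) ∈ T := by simpa using mem false 0 0
  have hmemT : ∀ g : Q, g ∈ T := by
    intro g
    have hg : g ∈ Subgroup.closure ({B, C} : Set Q) := hgen ▸ Subgroup.mem_top g
    refine Subgroup.closure_induction (p := fun x _ => x ∈ T) ?_ honeT ?_ ?_ hg
    · intro x hx
      rcases hx with rfl | rfl
      · simpa using mem false 0 1
      · simpa using mem false 1 0
    · rintro x y _ _ hx ⟨ε, j, k, rfl⟩
      cases ε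
      · have h3 := hTBn _ (hTCn _ hx (j : ℕ)) (k : ℕ)
        simpa [mul_assoc] using h3
      · have h3 := hTBn _ (hTCn _ (hTB _ hx) (j : ℕ)) (k : ℕ)
        simpa [mul_assoc] using h3
    · rintro x _ ⟨ε, j, k, rfl⟩
      set e : ℕ := if ε then 23 else 0 with he
      have hk : (k : ℕ) + (24 - (k : ℕ)) = 24 := Nat.add_sub_cancel' k.isLt.le
      have hj : (j : ℕ) + (3 - (j : ℕ)) = 3 := Nat.add_sub_cancel' j.isLt.le
      have h1 : B ^ (k : ℕ) * B ^ (24 - (k : ℕ)) = 1 := by rw [← pow_add, hk, hb]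
      have h2 : C ^ (j : ℕ) * C ^ (3 - (j : ℕ)) = 1 := by rw [← pow_add, hj, hc]
      have h3 : (if ε then B else 1) * B ^ e = 1 := by
        cases ε
        · simp [he]
        · show B * B ^ 23 = 1
          rw [← pow_succ']; exact hb
      have key : ((if ε then B else 1) * C ^ (j : ℕ) * B ^ (k : ℕ)) *
          (B ^ (24 - (k : ℕ)) * (C ^ (3 - (j : ℕ)) * B ^ e)) = 1 := by
        calc ((if ε then B else 1) * C ^ (j : ℕ) * B ^ (k : ℕ)) *
              (B ^ (24 - (k : ℕ)) * (C ^ (3 - (j : ℕ)) * B ^ e))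
            = (if ε then B else 1) * (C ^ (j : ℕ) *
              ((B ^ (k : ℕ) * B ^ (24 - (k : ℕ))) * (C ^ (3 - (j : ℕ)) * B ^ e))) := by
              simp [mul_assoc]
          _ = (if ε then B else 1) * (C ^ (j : ℕ) * (C ^ (3 - (j : ℕ)) * B ^ e)) := by
              rw [h1, one_mul]
          _ = (if ε then B else 1) * ((C ^ (j : ℕ) * C ^ (3 - (j : ℕ))) * B ^ e) := by
              simp [mul_assoc]
          _ = (if ε then B else 1) * B ^ e := by rw [h2, one_mul]
          _ = 1 := h3
      rw [inv_eq_of_mul_eq_one_right key]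
      have h4 := hTBn _ (hTCn _ (hTBn _ honeT (24 - (k : ℕ))) (3 - (j : ℕ))) e
      simpa [mul_assoc] using h4
  exact fun g => hmemT g

/-- In a group generated by `b`, `c` with `(bc)² = 1`, `c³ = 1`, `b²⁴ = 1`, every
element of the quotient by the normal closure `H` of the commutator
`[b², c] = b⁻²c⁻¹b²c` has a representative of the normal form `(b) c^{±1} b^k` with
`k ∈ {0,…,23}` (the leading `b` and the power of `c` optional); consequently `G/H` is
finite with at most `2·3·24 = 144` elements. -/
theorem quotient_by_commutator_finite {G : Type*} [Group G] (b c : G)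
    (hgen : Subgroup.closure {b, c} = (⊤ : Subgroup G))
    (hbc : (b * c) ^ 2 = 1) (hc : c ^ 3 = 1) (hb : b ^ 24 = 1) :
    (∀ g : G, ∃ (ε : Bool) (j : Fin 3) (k : Fin 24),
      (QuotientGroup.mk g :
          G ⧸ Subgroup.normalClosure {(b ^ 2)⁻¹ * c⁻¹ * b ^ 2 * c}) =
        QuotientGroup.mk ((if ε then b else 1) * c ^ (j : ℕ) * b ^ (k : ℕ))) ∧
    Nat.card (G ⧸ Subgroup.normalClosure {(b ^ 2)⁻¹ * c⁻¹ * b ^ 2 * c}) ≤ 144 := by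
  set H := Subgroup.normalClosure {(b ^ 2)⁻¹ * c⁻¹ * b ^ 2 * c} with hH
  let π : G →* G ⧸ H := QuotientGroup.mk' H
  have hsurj : Function.Surjective π := QuotientGroup.mk'_surjective H
  have hgen' : Subgroup.closure ({π b, π c} : Set (G ⧸ H)) = ⊤ := by
    have h1 : Subgroup.map π ⊤ = ⊤ := Subgroup.map_top_of_surjective π hsurj
    rw [← hgen, MonoidHom.map_closure] at h1
    rwa [Set.image_insert_eq, Set.image_singleton] at h1
  have hbc' : (π b * π c) ^ 2 = 1 := by rw [← map_mul, ← map_pow, hbc, map_one]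
  have hc' : (π c) ^ 3 = 1 := by rw [← map_pow, hc, map_one]
  have hb' : (π b) ^ 24 = 1 := by rw [← map_pow, hb, map_one]
  have hcomm' : (π b) ^ 2 * π c = π c * (π b) ^ 2 := by
    have hmem : (b ^ 2)⁻¹ * c⁻¹ * b ^ 2 * c ∈ H :=
      Subgroup.subset_normalClosure (Set.mem_singleton _)
    have h0 : π ((b ^ 2)⁻¹ * c⁻¹ * b ^ 2 * c) = 1 := (QuotientGroup.eq_one_iff _).mpr hmem
    have h1 : (π b ^ 2)⁻¹ * (π c)⁻¹ * π b ^ 2 * π c = 1 := by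
      simpa [map_mul, map_inv, map_pow] using h0
    have h2 := congrArg (fun x => (π c * π b ^ 2) * x) h1
    simp only [mul_one] at h2
    rw [← h2]
    group
  have main := aux_normal_form (π b) (π c) hgen' hbc' hc' hb' hcomm'
  constructor
  · intro g
    obtain ⟨ε, j, k, hform⟩ := main (π g)
    refine ⟨ε, j, k, ?_⟩
    have : π ((if ε then b else 1) * c ^ (j : ℕ) * b ^ (k : ℕ)) =
        (if ε then π b else 1) * (π c) ^ (j : ℕ) * (π b) ^ (k : ℕ) := by
      cases ε <;> simp [map_mul, map_pow]
    show π g = π _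
    rw [this, ← hform]
  · have hsurjf : Function.Surjective
        (fun p : Bool × Fin 3 × Fin 24 =>
          (if p.1 then π b else 1) * (π c) ^ (p.2.1 : ℕ) * (π b) ^ (p.2.2 : ℕ)) := by
      intro q
      obtain ⟨g, rfl⟩ := hsurj q
      obtain ⟨ε, j, k, hform⟩ := main (π g)
      exact ⟨(ε, j, k), hform.symm⟩
    have := Nat.card_le_card_of_surjective _ hsurjf
    simpa [Nat.card_prod] using this
end
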